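/- For positive definite matrices A and B, the geometric mean A # B = A^{1/2}(A^{-1/2} B A^{-1/2})^{1/2} A^{1/2} is symmetric: A # B = B # A. -/

import Mathlib

open scoped ComplexOrder
open Matrix

/-- The `t`-th power of a Hermitian matrix, defined via the spectral decomposition
(functional calculus with the real power function). -/
noncomputable def psdPow {n : ℕ} (A : Matrix (Fin n) (Fin n) ℂ) (hA : A.IsHermitian) (t : ℝ) :
    Matrix (Fin n) (Fin n) ℂ :=
  (hA.eigenvectorUnitary : Matrix (Fin n) (Fin n) ℂ) *
    Matrix.diagonal (fun i => ((hA.eigenvalues i ^ t : ℝ) : ℂ)) *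
    (hA.eigenvectorUnitary : Matrix (Fin n) (Fin n) ℂ)ᴴ

lemma psdPow_isHermitian {n : ℕ} (A : Matrix (Fin n) (Fin n) ℂ) (hA : A.IsHermitian) (t : ℝ) :
    (psdPow A hA t).IsHermitian := by
  unfold psdPow
  apply Matrix.isHermitian_mul_mul_conjTranspose
  rw [Matrix.isHermitian_diagonal_iff]
  intro i
  exact Complex.conj_ofReal _

lemma isHermitian_conj {n : ℕ} {C B : Matrix (Fin n) (Fin n) ℂ}
    (hC : C.IsHermitian) (hB : B.IsHermitian) : (C * B * C).IsHermitian := by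
  have := Matrix.isHermitian_mul_mul_conjTranspose C hB
  rwa [hC] at this

/-- The α-weighted geometric mean `A #_α B = A^{1/2} (A^{-1/2} B A^{-1/2})^α A^{1/2}`
of Hermitian (in applications, positive definite) matrices, where `A^{-1/2} = A^{(-1/2)}`
via functional calculus. -/
noncomputable def wGeomMean {n : ℕ} (A B : Matrix (Fin n) (Fin n) ℂ)
    (hA : A.IsHermitian) (hB : B.IsHermitian) (α : ℝ) : Matrix (Fin n) (Fin n) ℂ :=
  psdPow A hA (1/2) *
    psdPow (psdPow A hA (-(1/2)) * B * psdPow A hA (-(1/2)))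
      (isHermitian_conj (psdPow_isHermitian A hA (-(1/2))) hB) α *
    psdPow A hA (1/2)

lemma wGeomMean_isHermitian {n : ℕ} (A B : Matrix (Fin n) (Fin n) ℂ)
    (hA : A.IsHermitian) (hB : B.IsHermitian) (α : ℝ) : (wGeomMean A B hA hB α).IsHermitian :=
  isHermitian_conj (psdPow_isHermitian A hA (1/2)) (psdPow_isHermitian _ _ α)

/-! `A # B` is the unique positive semidefinite solution `X` of the Riccati equation
`X A⁻¹ X = B`: conjugating by `A^{-1/2}` turns it into `(A^{-1/2} X A^{-1/2})² = A^{-1/2} B A^{-1/2}`,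
and positive square roots are unique. Inverting `Y B⁻¹ Y = A`, which `B # A` solves, gives
`Y A⁻¹ Y = B`, so `B # A` solves the same equation. -/

open scoped MatrixOrder Matrix.Norms.L2Operator in
theorem Matrix.PosSemidef.eq_of_sq_eq_sq {𝕜 ι : Type*} [RCLike 𝕜] [Fintype ι] [DecidableEq ι]
    {P Q : Matrix ι ι 𝕜} (hP : P.PosSemidef) (hQ : Q.PosSemidef) (h : P ^ 2 = Q ^ 2) :
    P = Q :=
  (CFC.sq_eq_sq_iff P Q hP.nonneg hQ.nonneg).1 h

theorem Matrix.mul_inv_mul_self_eq_of_mul_inv_mul_self_eq {R ι : Type*} [CommRing R] [Fintype ι]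
    [DecidableEq ι] {A B Y : Matrix ι ι R} (hA : IsUnit A) (hB : IsUnit B)
    (h : Y * B⁻¹ * Y = A) : Y * A⁻¹ * Y = B := by
  subst h
  have hYd : IsUnit Y.det := by
    rw [isUnit_iff_isUnit_det, det_mul, det_mul] at hA
    exact isUnit_of_mul_isUnit_left (isUnit_of_mul_isUnit_left hA)
  rw [mul_inv_rev, mul_inv_rev, nonsing_inv_nonsing_inv B ((isUnit_iff_isUnit_det B).1 hB)]
  simp only [← mul_assoc, mul_nonsing_inv _ hYd, one_mul]
  rw [mul_assoc, nonsing_inv_mul _ hYd, mul_one]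

theorem Matrix.PosSemidef.mul_mul_of_isHermitian {R ι : Type*} [CommRing R] [PartialOrder R]
    [StarRing R] [Fintype ι] {M C : Matrix ι ι R} (hM : M.PosSemidef) (hC : C.IsHermitian) :
    (C * M * C).PosSemidef := by
  simpa only [hC.eq] using hM.mul_mul_conjTranspose_same C

section psdPow

variable {n : ℕ} {A : Matrix (Fin n) (Fin n) ℂ}

theorem psdPow_add_of_rpow_add (hA : A.IsHermitian) {s t : ℝ}
    (h : ∀ i, hA.eigenvalues i ^ (s + t) = hA.eigenvalues i ^ s * hA.eigenvalues i ^ t) :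
    psdPow A hA (s + t) = psdPow A hA s * psdPow A hA t := by
  have hU : (hA.eigenvectorUnitary : Matrix (Fin n) (Fin n) ℂ)ᴴ * hA.eigenvectorUnitary = 1 :=
    Unitary.coe_star_mul_self hA.eigenvectorUnitary
  simp only [psdPow, h, Complex.ofReal_mul, ← diagonal_mul_diagonal, mul_assoc]
  rw [← mul_assoc _ (hA.eigenvectorUnitary : Matrix (Fin n) (Fin n) ℂ), hU, one_mul]

theorem psdPow_add (hA : A.PosDef) (s t : ℝ) :
    psdPow A hA.1 (s + t) = psdPow A hA.1 s * psdPow A hA.1 t :=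
  psdPow_add_of_rpow_add hA.1 fun i ↦ Real.rpow_add (hA.eigenvalues_pos i) s t

theorem psdPow_add' (hA : A.PosSemidef) {s t : ℝ} (h : s + t ≠ 0) :
    psdPow A hA.1 (s + t) = psdPow A hA.1 s * psdPow A hA.1 t :=
  psdPow_add_of_rpow_add hA.1 fun i ↦ Real.rpow_add' (hA.eigenvalues_nonneg i) h

theorem psdPow_zero (hA : A.IsHermitian) : psdPow A hA 0 = 1 := by
  simpa [psdPow, Matrix.star_eq_conjTranspose] using
    Unitary.coe_mul_star_self hA.eigenvectorUnitary

theorem psdPow_one (hA : A.IsHermitian) : psdPow A hA 1 = A := by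
  conv_rhs => rw [hA.spectral_theorem]
  simp [psdPow, Unitary.conjStarAlgAut_apply, Matrix.star_eq_conjTranspose, Function.comp_def]

theorem psdPow_posSemidef (hA : A.PosSemidef) (t : ℝ) : (psdPow A hA.1 t).PosSemidef := by
  have hD : (diagonal fun i ↦ ((hA.1.eigenvalues i ^ t : ℝ) : ℂ)).PosSemidef :=
    posSemidef_diagonal_iff.2 fun i ↦ by
      exact_mod_cast Real.rpow_nonneg (hA.eigenvalues_nonneg i) t
  exact hD.mul_mul_conjTranspose_same _

theorem psdPow_mul_psdPow_neg (hA : A.PosDef) (t : ℝ) :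
    psdPow A hA.1 t * psdPow A hA.1 (-t) = 1 := by
  rw [← psdPow_add hA, add_neg_cancel, psdPow_zero]

theorem psdPow_neg_mul_psdPow (hA : A.PosDef) (t : ℝ) :
    psdPow A hA.1 (-t) * psdPow A hA.1 t = 1 := by
  simpa using psdPow_mul_psdPow_neg hA (-t)

theorem psdPow_half_mul_self (hA : A.PosSemidef) :
    psdPow A hA.1 (1 / 2) * psdPow A hA.1 (1 / 2) = A := by
  rw [← psdPow_add' hA (by norm_num), add_halves, psdPow_one]

theorem psdPow_neg_half_mul_self (hA : A.PosDef) :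
    psdPow A hA.1 (-(1 / 2)) * psdPow A hA.1 (-(1 / 2)) = A⁻¹ := by
  refine (Matrix.inv_eq_left_inv ?_).symm
  calc psdPow A hA.1 (-(1 / 2)) * psdPow A hA.1 (-(1 / 2)) * A
      = psdPow A hA.1 (-1) * psdPow A hA.1 1 := by
        rw [← psdPow_add hA, psdPow_one]; norm_num
    _ = 1 := psdPow_neg_mul_psdPow hA 1

theorem eq_of_mul_inv_mul_self_eq (hA : A.PosDef) {X Y : Matrix (Fin n) (Fin n) ℂ}
    (hX : X.PosSemidef) (hY : Y.PosSemidef) (h : X * A⁻¹ * X = Y * A⁻¹ * Y) : X = Y := by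
  set S := psdPow A hA.1 (1 / 2)
  set T := psdPow A hA.1 (-(1 / 2))
  have hT : T.IsHermitian := psdPow_isHermitian A hA.1 _
  have hTT : T * T = A⁻¹ := psdPow_neg_half_mul_self hA
  have hST : S * T = 1 := psdPow_mul_psdPow_neg hA _
  have hTS : T * S = 1 := psdPow_neg_mul_psdPow hA _
  have conj_sq : ∀ M, (T * M * T) ^ 2 = T * (M * A⁻¹ * M) * T := fun M ↦ by
    rw [sq, ← hTT]; simp only [mul_assoc]
  have hXY : T * X * T = T * Y * T :=
    (hX.mul_mul_of_isHermitian hT).eq_of_sq_eq_sq (hY.mul_mul_of_isHermitian hT)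
      (by rw [conj_sq, conj_sq, h])
  have unconj : ∀ M, S * (T * M * T) * S = M := fun M ↦ by
    rw [← mul_assoc, ← mul_assoc, hST, one_mul, mul_assoc, hTS, mul_one]
  rw [← unconj X, hXY, unconj]

end psdPow

section wGeomMean

variable {n : ℕ} {A B : Matrix (Fin n) (Fin n) ℂ}

theorem wGeomMean_posSemidef (hA : A.PosSemidef) (hB : B.PosSemidef) (α : ℝ) :
    (wGeomMean A B hA.1 hB.1 α).PosSemidef :=
  have hC := hB.mul_mul_of_isHermitian (psdPow_isHermitian A hA.1 (-(1 / 2)))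
  (psdPow_posSemidef hC α).mul_mul_of_isHermitian (psdPow_isHermitian A hA.1 (1 / 2))

theorem wGeomMean_half_mul_inv_mul_self (hA : A.PosDef) (hB : B.PosSemidef) :
    wGeomMean A B hA.1 hB.1 (1 / 2) * A⁻¹ * wGeomMean A B hA.1 hB.1 (1 / 2) = B := by
  set S := psdPow A hA.1 (1 / 2)
  set T := psdPow A hA.1 (-(1 / 2))
  have hST : S * T = 1 := psdPow_mul_psdPow_neg hA _
  have hTS : T * S = 1 := psdPow_neg_mul_psdPow hA _
  have hC := hB.mul_mul_of_isHermitian (psdPow_isHermitian A hA.1 (-(1 / 2)))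
  set R := psdPow (T * B * T) hC.1 (1 / 2)
  have hRR : R * R = T * B * T := psdPow_half_mul_self hC
  rw [← psdPow_neg_half_mul_self hA]
  calc S * R * S * (T * T) * (S * R * S) = S * R * (S * T) * (T * S) * R * S := by
        simp only [mul_assoc]
    _ = S * (T * B * T) * S := by rw [hST, hTS, ← hRR]; simp only [mul_one, mul_assoc]
    _ = (S * T) * B * (T * S) := by simp only [mul_assoc]
    _ = B := by rw [hST, hTS, one_mul, mul_one]

end wGeomMean

/-- The geometric mean of positive definite matrices is symmetric: `A # B = B # A`. -/
theorem geomMean_comm {n : ℕ} (A B : Matrix (Fin n) (Fin n) ℂ)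
    (hA : A.PosDef) (hB : B.PosDef) :
    wGeomMean A B hA.1 hB.1 (1/2) = wGeomMean B A hB.1 hA.1 (1/2) := by
  have hAB := wGeomMean_half_mul_inv_mul_self hA hB.posSemidef
  have hBA := wGeomMean_half_mul_inv_mul_self hB hA.posSemidef
  refine eq_of_mul_inv_mul_self_eq hA (wGeomMean_posSemidef hA.posSemidef hB.posSemidef _)
    (wGeomMean_posSemidef hB.posSemidef hA.posSemidef _) ?_
  rw [hAB, mul_inv_mul_self_eq_of_mul_inv_mul_self_eq hA.isUnit hB.isUnit hBA]
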